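/- arXiv:2107.00089 — 3 statements merged into one kernel-verified Lean document; each statement's English description precedes it below -/
import Mathlib

section
/- For every ε > 0 and every continuously differentiable function φ : ℝ^d → ℝ such that φ and the pointwise norm of its gradient |∇φ| both belong to L²(ℝ^d), one has ‖S^ε φ − φ‖_{L²} ≤ (√d / 2) · ε · ‖∇φ‖_{L²}. -/
open MeasureTheory

noncomputable section

/-- The unit cube `Y = [-1/2, 1/2)^d`. -/
def cube (d : ℕ) : Set (Fin d → ℝ) := Set.univ.pi fun _ => Set.Ico (-(1:ℝ)/2) (1/2)

/-- Steklov's smoothing operator: `(S^ε φ)(x) = ∫_Y φ(x - εω) dω`. -/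
def steklov (d : ℕ) (ε : ℝ) (φ : (Fin d → ℝ) → ℝ) (x : Fin d → ℝ) : ℝ :=
  ∫ ω in cube d, φ (x - ε • ω)

/-- Partial derivative in the `i`-th coordinate direction. -/
def pd (d : ℕ) (i : Fin d) (f : (Fin d → ℝ) → ℝ) (x : Fin d → ℝ) : ℝ :=
  fderiv ℝ f x (Pi.single i 1)

/-- Pointwise Euclidean norm of the gradient: `|∇φ(x)|`. -/
def gradNorm (d : ℕ) (φ : (Fin d → ℝ) → ℝ) (x : Fin d → ℝ) : ℝ :=
  Real.sqrt (∑ i, (pd d i φ x) ^ 2)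

/-!
Along the segment from `x` to `x - εω`, `φ(x - εω) - φ(x) = -∫₀¹ Dφ(x - tεω)(εω) dt`, and
`|εω| ≤ (√d / 2) ε` for `ω ∈ Y`. Hence `|S^ε φ - φ|(x) ≤ (√d / 2) ε · E |∇φ|(x - tεω)`, where
`(ω, t)` is uniform on `Y × (0, 1]`. An average of translates of a function `g` has `L^p` norm
at most `‖g‖_{L^p}`: by Jensen, then Tonelli, it is bounded by the average of the `L^p` norms of
the translates, which all equal `‖g‖_{L^p}`.
-/

open Set
open scoped ENNReal

section Averaging

variable {P : Type*} [MeasurableSpace P] (ν : Measure P) [IsProbabilityMeasure ν]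

theorem rpow_lintegral_le_lintegral_rpow {f : P → ℝ≥0∞} (hf : AEMeasurable f ν) {p : ℝ}
    (hp : 1 ≤ p) : (∫⁻ y, f y ∂ν) ^ p ≤ ∫⁻ y, f y ^ p ∂ν := by
  have h := eLpNorm'_le_eLpNorm'_of_exponent_le one_pos hp ν hf.aestronglyMeasurable
  simp only [eLpNorm', enorm_eq_self, ENNReal.rpow_one, div_one] at h
  calc (∫⁻ y, f y ∂ν) ^ p ≤ ((∫⁻ y, f y ^ p ∂ν) ^ (1 / p)) ^ p := by gcongr
    _ = ∫⁻ y, f y ^ p ∂ν := by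
      rw [← ENNReal.rpow_mul, one_div_mul_cancel (by positivity), ENNReal.rpow_one]

variable {G : Type*} [MeasurableSpace G] [AddGroup G] [MeasurableAdd₂ G] [MeasurableNeg G]
  (μ : Measure G) [μ.IsAddRightInvariant] [SFinite μ]

theorem eLpNorm_lintegral_comp_sub_le {g : G → ℝ≥0∞} (hg : Measurable g) {a : P → G}
    (ha : Measurable a) {p : ℝ≥0∞} (hp : 1 ≤ p) (hp_top : p ≠ ∞) :
    eLpNorm (fun x => ∫⁻ y, g (x - a y) ∂ν) p μ ≤ eLpNorm g p μ := by
  have hp_real : 1 ≤ p.toReal := by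
    simpa using (ENNReal.toReal_le_toReal ENNReal.one_ne_top hp_top).2 hp
  have hmeas : Measurable fun z : G × P => g (z.1 - a z.2) :=
    hg.comp (measurable_fst.sub (ha.comp measurable_snd))
  simp only [eLpNorm_eq_lintegral_rpow_enorm_toReal (one_pos.trans_le hp).ne' hp_top,
    enorm_eq_self]
  refine ENNReal.rpow_le_rpow ?_ (by positivity)
  calc ∫⁻ x, (∫⁻ y, g (x - a y) ∂ν) ^ p.toReal ∂μ
      ≤ ∫⁻ x, ∫⁻ y, g (x - a y) ^ p.toReal ∂ν ∂μ := lintegral_mono fun x =>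
        rpow_lintegral_le_lintegral_rpow ν (hmeas.comp measurable_prodMk_left).aemeasurable hp_real
    _ = ∫⁻ y, ∫⁻ x, g (x - a y) ^ p.toReal ∂μ ∂ν :=
        lintegral_lintegral_swap (hmeas.pow_const _).aemeasurable
    _ = ∫⁻ x, g x ^ p.toReal ∂μ := by
        simp_rw [lintegral_sub_right_eq_self (fun x => g x ^ p.toReal)]
        simp

end Averaging

section MeanValue

variable {E F : Type*} [NormedAddCommGroup E] [NormedSpace ℝ E] [NormedAddCommGroup F]
  [NormedSpace ℝ F] [CompleteSpace F]

theorem ContDiff.enorm_sub_le_lintegral_fderiv {f : E → F} (hf : ContDiff ℝ 1 f) (x v : E) :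
    ‖f (x - v) - f x‖ₑ ≤ ∫⁻ t in Ioc (0:ℝ) 1, ‖fderiv ℝ f (x - t • v) v‖ₑ := by
  have hpath (t : ℝ) : HasDerivAt (fun t : ℝ => x - t • v) (-v) t := by
    simpa using ((hasDerivAt_id t).smul_const v).const_sub x
  have hderiv (t : ℝ) :
      HasDerivAt (fun t : ℝ => f (x - t • v)) (fderiv ℝ f (x - t • v) (-v)) t :=
    ((hf.differentiable one_ne_zero).differentiableAt.hasFDerivAt).comp_hasDerivAt t (hpath t)
  have hcont : Continuous fun t : ℝ => fderiv ℝ f (x - t • v) (-v) := by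
    have := hf.continuous_fderiv one_ne_zero
    fun_prop
  have hftc : f (x - v) - f x = ∫ t in Ioc (0:ℝ) 1, fderiv ℝ f (x - t • v) (-v) := by
    rw [← intervalIntegral.integral_of_le zero_le_one,
      intervalIntegral.integral_eq_sub_of_hasDerivAt (fun t _ => hderiv t)
        (hcont.intervalIntegrable 0 1)]
    simp
  rw [hftc]
  refine (enorm_integral_le_lintegral_enorm _).trans_eq ?_
  simp only [map_neg, enorm_neg]

end MeanValue

namespace Steklov

variable {d : ℕ} {φ : (Fin d → ℝ) → ℝ}

theorem measurableSet_cube (d : ℕ) : MeasurableSet (cube d) :=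
  MeasurableSet.univ_pi fun _ => measurableSet_Ico

theorem volume_cube (d : ℕ) : volume (cube d) = 1 := by
  rw [cube, volume_pi_pi]
  norm_num [Real.volume_Ico]

theorem cube_subset_Icc (d : ℕ) : cube d ⊆ Icc (fun _ => -(1:ℝ)/2) (fun _ => 1/2) := by
  rw [← pi_univ_Icc]
  exact pi_mono fun _ _ => Ico_subset_Icc_self

theorem sqrt_sum_sq_le_of_mem_cube {ω : Fin d → ℝ} (hω : ω ∈ cube d) :
    √(∑ i, ω i ^ 2) ≤ √d / 2 := by
  have hsq (i : Fin d) : ω i ^ 2 ≤ (1 / 2) ^ 2 := by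
    have hi := hω i (mem_univ i)
    exact sq_le_sq' (by linarith [hi.1]) hi.2.le
  calc √(∑ i, ω i ^ 2) ≤ √(∑ _i : Fin d, (1 / 2 : ℝ) ^ 2) :=
        Real.sqrt_le_sqrt (Finset.sum_le_sum fun i _ => hsq i)
    _ = √d / 2 := by
        rw [Finset.sum_const, Finset.card_univ, Fintype.card_fin, nsmul_eq_mul,
          Real.sqrt_mul (Nat.cast_nonneg d), Real.sqrt_sq (by norm_num)]
        ring

theorem fderiv_apply_eq_sum_pd (y v : Fin d → ℝ) :
    fderiv ℝ φ y v = ∑ i, v i * pd d i φ y := by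
  conv_lhs => rw [pi_eq_sum_univ' v]
  simp [map_sum, pd, smul_eq_mul]

theorem abs_fderiv_apply_le (y v : Fin d → ℝ) :
    |fderiv ℝ φ y v| ≤ √(∑ i, v i ^ 2) * gradNorm d φ y := by
  rw [fderiv_apply_eq_sum_pd, gradNorm, ← Real.sqrt_mul (by positivity), ← Real.sqrt_sq_eq_abs]
  exact Real.sqrt_le_sqrt (Finset.sum_mul_sq_le_sq_mul_sq _ _ _)

theorem gradNorm_nonneg (y : Fin d → ℝ) : 0 ≤ gradNorm d φ y := Real.sqrt_nonneg _

theorem continuous_gradNorm (hφ : ContDiff ℝ 1 φ) : Continuous (gradNorm d φ) := by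
  have := hφ.continuous_fderiv one_ne_zero
  unfold gradNorm pd
  fun_prop

theorem enorm_fderiv_smul_le {ε : ℝ} (hε : 0 ≤ ε) {ω : Fin d → ℝ} (hω : ω ∈ cube d)
    (y : Fin d → ℝ) :
    ‖fderiv ℝ φ y (ε • ω)‖ₑ ≤ ENNReal.ofReal (√d / 2 * ε) * ‖gradNorm d φ y‖ₑ := by
  rw [map_smul, smul_eq_mul, Real.enorm_eq_ofReal_abs, Real.enorm_eq_ofReal (gradNorm_nonneg y),
    ← ENNReal.ofReal_mul (by positivity), abs_mul, abs_of_nonneg hε]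
  refine ENNReal.ofReal_le_ofReal ?_
  calc ε * |fderiv ℝ φ y ω| ≤ ε * (√(∑ i, ω i ^ 2) * gradNorm d φ y) := by
        gcongr; exact abs_fderiv_apply_le y ω
    _ ≤ ε * (√d / 2 * gradNorm d φ y) := by
        gcongr
        · exact gradNorm_nonneg y
        · exact sqrt_sum_sq_le_of_mem_cube hω
    _ = √d / 2 * ε * gradNorm d φ y := by ring

theorem steklov_sub_eq_setIntegral (hφ : Continuous φ) (ε : ℝ) (x : Fin d → ℝ) :
    steklov d ε φ x - φ x = ∫ ω in cube d, (φ (x - ε • ω) - φ x) := by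
  have hcont : Continuous fun ω : Fin d → ℝ => φ (x - ε • ω) := by fun_prop
  have hint : IntegrableOn (fun ω => φ (x - ε • ω)) (cube d) :=
    (hcont.continuousOn.integrableOn_compact isCompact_Icc).mono_set (cube_subset_Icc d)
  rw [integral_sub hint (integrableOn_const (by simp [volume_cube]))]
  simp [steklov, measureReal_def, volume_cube]

def cubeSegmentMeasure (d : ℕ) : Measure ((Fin d → ℝ) × ℝ) :=
  (volume.restrict (cube d)).prod (volume.restrict (Ioc 0 1))

instance : IsProbabilityMeasure (cubeSegmentMeasure d) := by
  have : IsProbabilityMeasure (volume.restrict (cube d)) := ⟨by simp [volume_cube]⟩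
  have : IsProbabilityMeasure (volume.restrict (Ioc (0:ℝ) 1)) := ⟨by simp⟩
  unfold cubeSegmentMeasure
  infer_instance

theorem enorm_steklov_sub_le (hφ : ContDiff ℝ 1 φ) {ε : ℝ} (hε : 0 ≤ ε) (x : Fin d → ℝ) :
    ‖steklov d ε φ x - φ x‖ₑ ≤ ENNReal.ofReal (√d / 2 * ε) *
      ∫⁻ q, ‖gradNorm d φ (x - q.2 • ε • q.1)‖ₑ ∂cubeSegmentMeasure d := by
  set C := ENNReal.ofReal (√d / 2 * ε)
  have hG : Measurable fun q : (Fin d → ℝ) × ℝ => ‖gradNorm d φ (x - q.2 • ε • q.1)‖ₑ :=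
    ((continuous_gradNorm hφ).comp (by fun_prop)).enorm.measurable
  have hpointwise : ∀ ω ∈ cube d, ‖φ (x - ε • ω) - φ x‖ₑ ≤
      ∫⁻ t in Ioc (0:ℝ) 1, C * ‖gradNorm d φ (x - t • ε • ω)‖ₑ := fun ω hω =>
    (hφ.enorm_sub_le_lintegral_fderiv x (ε • ω)).trans
      (lintegral_mono fun t => enorm_fderiv_smul_le hε hω _)
  calc ‖steklov d ε φ x - φ x‖ₑ
      = ‖∫ ω in cube d, (φ (x - ε • ω) - φ x)‖ₑ := by
        rw [steklov_sub_eq_setIntegral hφ.continuous]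
    _ ≤ ∫⁻ ω in cube d, ‖φ (x - ε • ω) - φ x‖ₑ := enorm_integral_le_lintegral_enorm _
    _ ≤ ∫⁻ ω in cube d, ∫⁻ t in Ioc (0:ℝ) 1, C * ‖gradNorm d φ (x - t • ε • ω)‖ₑ :=
        setLIntegral_mono' (measurableSet_cube d) hpointwise
    _ = C * ∫⁻ q, ‖gradNorm d φ (x - q.2 • ε • q.1)‖ₑ ∂cubeSegmentMeasure d := by
        rw [cubeSegmentMeasure, lintegral_prod _ hG.aemeasurable]
        have hC : C ≠ ∞ := ENNReal.ofReal_ne_top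
        simp only [lintegral_const_mul' C _ hC]

end Steklov

open Steklov

theorem statement2_general {d : ℕ} (ε : ℝ) (hε : 0 < ε)
    (φ : (Fin d → ℝ) → ℝ) (hφ : ContDiff ℝ 1 φ) :
    eLpNorm (fun x => steklov d ε φ x - φ x) 2 volume ≤
      ENNReal.ofReal (Real.sqrt d / 2 * ε) * eLpNorm (gradNorm d φ) 2 volume := by
  have hG : Measurable fun y => ‖gradNorm d φ y‖ₑ := (continuous_gradNorm hφ).enorm.measurable
  calc eLpNorm (fun x => steklov d ε φ x - φ x) 2 volume
      ≤ ENNReal.ofReal (√d / 2 * ε) * eLpNorm (fun x =>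
          ∫⁻ q, ‖gradNorm d φ (x - q.2 • ε • q.1)‖ₑ ∂cubeSegmentMeasure d) 2 volume :=
        eLpNorm_le_nnreal_smul_eLpNorm_of_ae_le_mul'
          (ae_of_all _ fun x =>
            (enorm_steklov_sub_le hφ hε.le x).trans_eq (by rw [enorm_eq_self]; rfl)) 2
    _ ≤ ENNReal.ofReal (√d / 2 * ε) * eLpNorm (fun y => ‖gradNorm d φ y‖ₑ) 2 volume := by
        gcongr
        exact eLpNorm_lintegral_comp_sub_le _ volume hG (by fun_prop) one_le_two
          ENNReal.ofNat_ne_top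
    _ = ENNReal.ofReal (Real.sqrt d / 2 * ε) * eLpNorm (gradNorm d φ) 2 volume := by
        rw [eLpNorm_enorm]

/-- For every `ε > 0` and every `C¹` function `φ : ℝ^d → ℝ` with
`φ` and `|∇φ|` in `L²(ℝ^d)`, one has `‖S^ε φ - φ‖_{L²} ≤ (√d / 2) ε ‖∇φ‖_{L²}`. -/
theorem statement2 {d : ℕ} (ε : ℝ) (hε : 0 < ε)
    (φ : (Fin d → ℝ) → ℝ) (hφ : ContDiff ℝ 1 φ)
    (hφ2 : MemLp φ 2 volume) (hgrad : MemLp (gradNorm d φ) 2 volume) :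
    eLpNorm (fun x => steklov d ε φ x - φ x) 2 volume ≤
      ENNReal.ofReal (Real.sqrt d / 2 * ε) * eLpNorm (gradNorm d φ) 2 volume :=
  statement2_general ε hε φ hφ
end
end

section
/- There exists a constant C depending only on the dimension d such that for every ε > 0 and every twice continuously differentiable function φ : ℝ^d → ℝ such that φ and the pointwise norm of its Hessian |∇²φ| both belong to L²(ℝ^d), one has ‖S^ε φ − φ‖_{L²} ≤ C ε² ‖∇²φ‖_{L²}. -/
open MeasureTheory

noncomputable section

/-- Pointwise Euclidean (Frobenius) norm of the Hessian: `|∇²φ(x)|`. -/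
def hessNorm (d : ℕ) (φ : (Fin d → ℝ) → ℝ) (x : Fin d → ℝ) : ℝ :=
  Real.sqrt (∑ i, ∑ j, (pd d i (pd d j φ) x) ^ 2)

/-!
Since the cube is symmetric, `∫_Y ω dω = 0`, so `S^ε φ(x) - φ(x)` is the `Y`-average of the
first-order Taylor remainder of `φ` at `x` in the direction `-εω`. In integral form that remainder
is at most `|εω|₁² ∫₀¹ |∇²φ(x - tεω)| dt ≤ (dε/2)² ∫₀¹ |∇²φ(x - tεω)| dt`. So `|S^ε φ - φ|` is
bounded by `(dε/2)²` times an average of translates of `|∇²φ|` against a probability measure,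
and by Jensen, Tonelli and translation invariance such an average does not increase `L²` norms.
-/

open scoped ENNReal
open Set

section Symmetric

variable {G : Type*} [MeasurableSpace G]

theorem isNegInvariant_restrict [InvolutiveNeg G] [MeasurableNeg G] (μ : Measure G)
    [μ.IsNegInvariant] {s : Set G} (hs : MeasurableSet s) (hneg : -s = s) :
    (μ.restrict s).IsNegInvariant := by
  constructor
  calc (μ.restrict s).map Neg.neg = (μ.restrict (Neg.neg ⁻¹' s)).map Neg.neg := by
        rw [show Neg.neg ⁻¹' s = s from hneg]
    _ = (μ.map Neg.neg).restrict s := (Measure.restrict_map measurable_neg hs).symm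
    _ = μ.restrict s := by rw [Measure.map_neg_eq_self]

theorem integral_eq_zero_of_odd {E : Type*} [AddGroup G] [MeasurableNeg G] [NormedAddCommGroup E]
    [NormedSpace ℝ E] (μ : Measure G) [μ.IsNegInvariant] {f : G → E}
    (hf : ∀ x, f (-x) = -f x) : ∫ x, f x ∂μ = 0 := by
  have h : ∫ x, f x ∂μ = -∫ x, f x ∂μ := by
    rw [← integral_neg, ← integral_neg_eq_self f μ]
    simp_rw [hf]
  have h2 : (2 : ℝ) • ∫ x, f x ∂μ = 0 := by
    rw [two_smul]
    nth_rw 1 [h]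
    exact neg_add_cancel _
  exact (smul_eq_zero.mp h2).resolve_left two_ne_zero

end Symmetric

theorem rpow_lintegral_le_lintegral_rpow_s3 {Ω : Type*} [MeasurableSpace Ω] (P : Measure Ω)
    [IsProbabilityMeasure P] {f : Ω → ℝ≥0∞} (hf : AEMeasurable f P) {q : ℝ} (hq : 1 ≤ q) :
    (∫⁻ ω, f ω ∂P) ^ q ≤ ∫⁻ ω, f ω ^ q ∂P := by
  have h := eLpNorm'_le_eLpNorm'_of_exponent_le zero_lt_one hq P hf.aestronglyMeasurable
  simp only [eLpNorm'_eq_lintegral_enorm, enorm_eq_self, ENNReal.rpow_one, div_one] at h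
  calc (∫⁻ ω, f ω ∂P) ^ q ≤ ((∫⁻ ω, f ω ^ q ∂P) ^ (1 / q)) ^ q := by gcongr
    _ = ∫⁻ ω, f ω ^ q ∂P := by
      rw [← ENNReal.rpow_mul, one_div_mul_cancel (by positivity), ENNReal.rpow_one]

theorem eLpNorm_lintegral_comp_add_le {G Ω : Type*} [MeasurableSpace G] [AddGroup G]
    [MeasurableAdd₂ G] [MeasurableSpace Ω] (μ : Measure G) [SFinite μ] [μ.IsAddRightInvariant]
    (P : Measure Ω) [IsProbabilityMeasure P] {g : G → ℝ≥0∞} (hg : Measurable g) {T : Ω → G}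
    (hT : Measurable T) {p : ℝ≥0∞} (hp : 1 ≤ p) (hp_top : p ≠ ∞) :
    eLpNorm (fun x => ∫⁻ ω, g (x + T ω) ∂P) p μ ≤ eLpNorm g p μ := by
  have hp0 : p ≠ 0 := (zero_lt_one.trans_le hp).ne'
  have hq : 1 ≤ p.toReal := by
    simpa using ENNReal.toReal_mono hp_top hp
  rw [eLpNorm_eq_lintegral_rpow_enorm_toReal hp0 hp_top,
    eLpNorm_eq_lintegral_rpow_enorm_toReal hp0 hp_top]
  simp only [enorm_eq_self]
  refine ENNReal.rpow_le_rpow ?_ (by positivity)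
  have hmeas : Measurable fun z : G × Ω => g (z.1 + T z.2) ^ p.toReal :=
    (hg.comp (measurable_fst.add (hT.comp measurable_snd))).pow_const _
  calc ∫⁻ x, (∫⁻ ω, g (x + T ω) ∂P) ^ p.toReal ∂μ
      ≤ ∫⁻ x, ∫⁻ ω, g (x + T ω) ^ p.toReal ∂P ∂μ := lintegral_mono fun x =>
        rpow_lintegral_le_lintegral_rpow_s3 P
          (hg.comp (measurable_const.add hT)).aemeasurable hq
    _ = ∫⁻ ω, ∫⁻ x, g (x + T ω) ^ p.toReal ∂μ ∂P :=
        lintegral_lintegral_swap hmeas.aemeasurable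
    _ = ∫⁻ x, g x ^ p.toReal ∂μ := by
        simp only [lintegral_add_right_eq_self (fun x => g x ^ p.toReal), lintegral_const,
          measure_univ, mul_one]

section Taylor

variable {E F : Type*} [NormedAddCommGroup E] [NormedSpace ℝ E] [NormedAddCommGroup F]
  [NormedSpace ℝ F] [CompleteSpace F]

theorem norm_sub_sub_le_integral_norm_of_hasDerivAt {g g' g'' : ℝ → F}
    (hg : ∀ t, HasDerivAt g (g' t) t) (hg' : ∀ t, HasDerivAt g' (g'' t) t)
    (hg'' : Continuous g'') :
    ‖g 1 - g 0 - g' 0‖ ≤ ∫ t in (0 : ℝ)..1, ‖g'' t‖ := by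
  have hg'c : Continuous g' := continuous_iff_continuousAt.2 fun t => (hg' t).continuousAt
  have increment : ∀ t ∈ Ioc (0 : ℝ) 1, ‖g' t - g' 0‖ ≤ ∫ s in (0 : ℝ)..1, ‖g'' s‖ := by
    intro t ht
    rw [← intervalIntegral.integral_eq_sub_of_hasDerivAt (fun s _ => hg' s)
      (hg''.intervalIntegrable 0 t)]
    calc _ ≤ ∫ s in (0 : ℝ)..t, ‖g'' s‖ := intervalIntegral.norm_integral_le_integral_norm ht.1.le
      _ ≤ _ := intervalIntegral.integral_mono_interval le_rfl ht.1.le ht.2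
          (ae_of_all _ fun _ => norm_nonneg _) (hg''.norm.intervalIntegrable 0 1)
  have remainder : g 1 - g 0 - g' 0 = ∫ t in (0 : ℝ)..1, (g' t - g' 0) := by
    rw [intervalIntegral.integral_sub (hg'c.intervalIntegrable 0 1) intervalIntegrable_const,
      intervalIntegral.integral_eq_sub_of_hasDerivAt (fun t _ => hg t)
        (hg'c.intervalIntegrable 0 1)]
    simp
  rw [remainder]
  simpa using intervalIntegral.norm_integral_le_of_norm_le_const (a := 0) (b := 1)
    (fun t ht => increment t (by rwa [uIoc_of_le zero_le_one] at ht))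

theorem enorm_taylor_remainder_le {φ : E → F} (hφ : ContDiff ℝ 2 φ) (x u : E) :
    ‖φ (x + u) - φ x - fderiv ℝ φ x u‖ₑ
      ≤ ∫⁻ t in Ioc (0 : ℝ) 1, ‖fderiv ℝ (fderiv ℝ φ) (x + t • u) u u‖ₑ := by
  have hφ' : ContDiff ℝ 1 (fderiv ℝ φ) := hφ.fderiv_right le_rfl
  have hline : ∀ t : ℝ, HasDerivAt (fun t : ℝ => x + t • u) u t := fun t => by
    simpa using ((hasDerivAt_id t).smul_const u).const_add x
  have hg : ∀ t, HasDerivAt (fun t => φ (x + t • u)) (fderiv ℝ φ (x + t • u) u) t := fun t =>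
    (hφ.differentiable (by norm_num) _).hasFDerivAt.comp_hasDerivAt t (hline t)
  have hg' : ∀ t, HasDerivAt (fun t => fderiv ℝ φ (x + t • u) u)
      (fderiv ℝ (fderiv ℝ φ) (x + t • u) u u) t := fun t => by
    simpa using ((hφ'.differentiable one_ne_zero _).hasFDerivAt.comp_hasDerivAt t
      (hline t)).clm_apply (hasDerivAt_const t u)
  have hg'' : Continuous fun t : ℝ => fderiv ℝ (fderiv ℝ φ) (x + t • u) u u :=
    (((hφ'.continuous_fderiv one_ne_zero).comp (by fun_prop)).clm_apply continuous_const).clm_apply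
      continuous_const
  have h := norm_sub_sub_le_integral_norm_of_hasDerivAt hg hg' hg''
  simp only [one_smul, zero_smul, add_zero] at h
  rw [← ofReal_norm, ← ofReal_integral_norm_eq_lintegral_enorm
    (hg''.integrableOn_Icc.mono_set Ioc_subset_Icc_self),
    ← intervalIntegral.integral_of_le zero_le_one]
  exact ENNReal.ofReal_le_ofReal h

end Taylor

section Cube

variable {d : ℕ}

instance : IsProbabilityMeasure (volume.restrict (cube d)) :=
  ⟨by norm_num [cube, Real.volume_pi_Ico]⟩

instance : IsProbabilityMeasure (volume.restrict (Ioc (0 : ℝ) 1)) :=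
  ⟨by simp⟩

theorem cube_ae_eq_Icc :
    cube d =ᵐ[volume] Icc (fun _ => -(1 : ℝ) / 2) (fun _ => 1 / 2) :=
  Measure.univ_pi_Ico_ae_eq_Icc

instance : (volume.restrict (cube d)).IsNegInvariant := by
  rw [Measure.restrict_congr_set cube_ae_eq_Icc]
  refine isNegInvariant_restrict volume measurableSet_Icc ?_
  rw [Set.neg_Icc]
  congr 1 <;> ext <;> norm_num

theorem Continuous.integrable_restrict_cube {E : Type*} [NormedAddCommGroup E]
    {f : (Fin d → ℝ) → E} (hf : Continuous f) : Integrable f (volume.restrict (cube d)) :=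
  hf.integrableOn_Icc.congr_set_ae cube_ae_eq_Icc

theorem sum_abs_le_of_mem_cube {ω : Fin d → ℝ} (hω : ω ∈ cube d) : ∑ i, |ω i| ≤ d / 2 := by
  calc ∑ i, |ω i| ≤ ∑ _i : Fin d, (1 / 2 : ℝ) := by
        gcongr with i
        have := hω i (mem_univ i)
        rw [abs_le]
        constructor <;> linarith [this.1, this.2]
    _ = d / 2 := by
      simp only [Finset.sum_const, Finset.card_univ, Fintype.card_fin, nsmul_eq_mul]
      ring

end Cube

section Hessian

variable {d : ℕ} {φ : (Fin d → ℝ) → ℝ}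

theorem measurable_pd (i : Fin d) (f : (Fin d → ℝ) → ℝ) : Measurable (pd d i f) :=
  measurable_fderiv_apply_const ℝ f _

theorem measurable_hessNorm : Measurable (hessNorm d φ) :=
  (Finset.measurable_sum _ fun i _ => Finset.measurable_sum _ fun _ _ =>
    (measurable_pd i _).pow_const 2).sqrt

theorem hessNorm_nonneg {y : Fin d → ℝ} : 0 ≤ hessNorm d φ y :=
  Real.sqrt_nonneg _

theorem pd_pd_eq_fderiv_fderiv {y : Fin d → ℝ} (h : DifferentiableAt ℝ (fderiv ℝ φ) y)
    (i j : Fin d) :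
    pd d i (pd d j φ) y = fderiv ℝ (fderiv ℝ φ) y (Pi.single i 1) (Pi.single j 1) := by
  change fderiv ℝ (fun z => fderiv ℝ φ z (Pi.single j 1)) y (Pi.single i 1) = _
  simp [fderiv_clm_apply h (differentiableAt_const _)]

theorem abs_pd_pd_le_hessNorm (i j : Fin d) (y : Fin d → ℝ) :
    |pd d i (pd d j φ) y| ≤ hessNorm d φ y := by
  rw [← Real.sqrt_sq_eq_abs]
  refine Real.sqrt_le_sqrt ?_
  calc pd d i (pd d j φ) y ^ 2 ≤ ∑ j', pd d i (pd d j' φ) y ^ 2 :=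
        Finset.single_le_sum (f := fun j' => pd d i (pd d j' φ) y ^ 2)
          (fun _ _ => sq_nonneg _) (Finset.mem_univ j)
    _ ≤ ∑ i', ∑ j', pd d i' (pd d j' φ) y ^ 2 :=
        Finset.single_le_sum (f := fun i' => ∑ j', pd d i' (pd d j' φ) y ^ 2)
          (fun _ _ => Finset.sum_nonneg fun _ _ => sq_nonneg _) (Finset.mem_univ i)

theorem abs_fderiv_fderiv_apply_le {y : Fin d → ℝ} (h : DifferentiableAt ℝ (fderiv ℝ φ) y)
    (u v : Fin d → ℝ) :
    |fderiv ℝ (fderiv ℝ φ) y u v| ≤ (∑ i, |u i|) * (∑ j, |v j|) * hessNorm d φ y := by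
  have expand : fderiv ℝ (fderiv ℝ φ) y u v = ∑ i, ∑ j, u i * v j * pd d i (pd d j φ) y := by
    conv_lhs => rw [pi_eq_sum_univ' u, pi_eq_sum_univ' v]
    simp only [map_sum, map_smul, sum_apply, smul_apply,
      smul_eq_mul, Finset.mul_sum, pd_pd_eq_fderiv_fderiv h, mul_assoc]
    rw [Finset.sum_comm]
    simp [mul_left_comm]
  rw [expand, Finset.sum_mul_sum, Finset.sum_mul]
  refine (Finset.abs_sum_le_sum_abs _ _).trans (Finset.sum_le_sum fun i _ => ?_)
  rw [Finset.sum_mul]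
  refine (Finset.abs_sum_le_sum_abs _ _).trans (Finset.sum_le_sum fun j _ => ?_)
  rw [abs_mul, abs_mul]
  gcongr
  exact abs_pd_pd_le_hessNorm i j y

end Hessian

section Steklov

variable {d : ℕ} {φ : (Fin d → ℝ) → ℝ}

theorem sum_abs_smul_le_of_mem_cube {ω : Fin d → ℝ} (hω : ω ∈ cube d) (c : ℝ) :
    ∑ i, |(c • ω) i| ≤ d * |c| / 2 := by
  simp only [Pi.smul_apply, smul_eq_mul, abs_mul, ← Finset.mul_sum]
  nlinarith [sum_abs_le_of_mem_cube hω, abs_nonneg c]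

theorem enorm_fderiv_fderiv_smul_apply_le {y ω : Fin d → ℝ}
    (h : DifferentiableAt ℝ (fderiv ℝ φ) y) (hω : ω ∈ cube d) (c : ℝ) :
    ‖fderiv ℝ (fderiv ℝ φ) y (c • ω) (c • ω)‖ₑ
      ≤ ENNReal.ofReal ((d * c / 2) ^ 2) * ‖hessNorm d φ y‖ₑ := by
  have hsq : (∑ i, |(c • ω) i|) * (∑ i, |(c • ω) i|) ≤ (d * c / 2) ^ 2 := by
    have hsum := sum_abs_smul_le_of_mem_cube hω c
    rw [← sq_abs (d * c / 2), abs_div, abs_mul, Nat.abs_cast, abs_two, sq]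
    gcongr
  rw [Real.enorm_eq_ofReal_abs, Real.enorm_eq_ofReal hessNorm_nonneg,
    ← ENNReal.ofReal_mul (sq_nonneg _)]
  refine ENNReal.ofReal_le_ofReal ((abs_fderiv_fderiv_apply_le h _ _).trans ?_)
  gcongr
  exact hessNorm_nonneg

theorem steklov_sub_self_eq_integral (hφ : Continuous φ) (ε : ℝ) (x : Fin d → ℝ) :
    steklov d ε φ x - φ x = ∫ ω, (φ (x + (-ε) • ω) - φ x - fderiv ℝ φ x ((-ε) • ω))
      ∂(volume.restrict (cube d)) := by
  have hint : Integrable (fun ω => φ (x + (-ε) • ω)) (volume.restrict (cube d)) :=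
    (hφ.comp (by fun_prop)).integrable_restrict_cube
  have hlin : Integrable (fun ω => fderiv ℝ φ x ((-ε) • ω)) (volume.restrict (cube d)) :=
    (by fun_prop : Continuous fun ω => fderiv ℝ φ x ((-ε) • ω)).integrable_restrict_cube
  have hodd : ∫ ω, fderiv ℝ φ x ((-ε) • ω) ∂(volume.restrict (cube d)) = 0 :=
    integral_eq_zero_of_odd _ fun ω => by simp
  rw [integral_sub (f := fun ω => φ (x + (-ε) • ω) - φ x) (hint.sub (integrable_const _)) hlin,
    integral_sub hint (integrable_const _), hodd, integral_const]
  simp [steklov, sub_eq_add_neg]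

theorem enorm_steklov_sub_self_le (hφ : ContDiff ℝ 2 φ) (ε : ℝ) (x : Fin d → ℝ) :
    ‖steklov d ε φ x - φ x‖ₑ ≤ ENNReal.ofReal ((d * ε / 2) ^ 2) *
      ∫⁻ q, ‖hessNorm d φ (x + q.2 • (-ε) • q.1)‖ₑ
        ∂((volume.restrict (cube d)).prod (volume.restrict (Ioc (0 : ℝ) 1))) := by
  have hD : Differentiable ℝ (fderiv ℝ φ) :=
    (hφ.fderiv_right le_rfl).differentiable one_ne_zero
  have remainder : ∀ ω ∈ cube d,
      ‖φ (x + (-ε) • ω) - φ x - fderiv ℝ φ x ((-ε) • ω)‖ₑ ≤ ENNReal.ofReal ((d * ε / 2) ^ 2) *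
        ∫⁻ t in Ioc (0 : ℝ) 1, ‖hessNorm d φ (x + t • (-ε) • ω)‖ₑ := fun ω hω => by
    rw [← lintegral_const_mul' _ _ ENNReal.ofReal_ne_top]
    exact (enorm_taylor_remainder_le hφ x _).trans
      (lintegral_mono fun t => (enorm_fderiv_fderiv_smul_apply_le (hD _) hω (-ε)).trans_eq
        (by rw [mul_neg, neg_div, neg_sq]))
  have hmeas : Measurable fun q : (Fin d → ℝ) × ℝ => ‖hessNorm d φ (x + q.2 • (-ε) • q.1)‖ₑ :=
    measurable_hessNorm.enorm.comp (by fun_prop)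
  calc ‖steklov d ε φ x - φ x‖ₑ
      = ‖∫ ω, (φ (x + (-ε) • ω) - φ x - fderiv ℝ φ x ((-ε) • ω)) ∂(volume.restrict (cube d))‖ₑ :=
        by rw [steklov_sub_self_eq_integral hφ.continuous]
    _ ≤ ∫⁻ ω, ‖φ (x + (-ε) • ω) - φ x - fderiv ℝ φ x ((-ε) • ω)‖ₑ ∂(volume.restrict (cube d)) :=
        enorm_integral_le_lintegral_enorm _
    _ ≤ ∫⁻ ω, ENNReal.ofReal ((d * ε / 2) ^ 2) *
          (∫⁻ t in Ioc (0 : ℝ) 1, ‖hessNorm d φ (x + t • (-ε) • ω)‖ₑ) ∂(volume.restrict (cube d)) :=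
        setLIntegral_mono' (MeasurableSet.univ_pi fun _ => measurableSet_Ico) remainder
    _ = _ := by
        rw [lintegral_const_mul' _ _ ENNReal.ofReal_ne_top, lintegral_prod _ hmeas.aemeasurable]

end Steklov

/-- There is a constant `C = C(d)` such that for every `ε > 0` and every
`C²` function `φ : ℝ^d → ℝ` with `φ` and `|∇²φ|` in `L²(ℝ^d)`,
one has `‖S^ε φ - φ‖_{L²} ≤ C ε² ‖∇²φ‖_{L²}`. -/
theorem statement3 (d : ℕ) :
    ∃ C : ℝ, 0 < C ∧ ∀ ε : ℝ, 0 < ε → ∀ φ : (Fin d → ℝ) → ℝ, ContDiff ℝ 2 φ →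
      MemLp φ 2 volume → MemLp (hessNorm d φ) 2 volume →
      eLpNorm (fun x => steklov d ε φ x - φ x) 2 volume ≤
        ENNReal.ofReal (C * ε ^ 2) * eLpNorm (hessNorm d φ) 2 volume := by
  refine ⟨((d + 1) / 2) ^ 2, by positivity, fun ε _ φ hφ _ _ => ?_⟩
  set P := (volume.restrict (cube d)).prod (volume.restrict (Ioc (0 : ℝ) 1))
  have average := eLpNorm_lintegral_comp_add_le volume P (measurable_hessNorm (φ := φ)).enorm
    (T := fun q => q.2 • (-ε) • q.1) (by fun_prop) one_le_two ENNReal.ofNat_ne_top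
  rw [eLpNorm_enorm] at average
  calc eLpNorm (fun x => steklov d ε φ x - φ x) 2 volume
      ≤ ((d * ε / 2) ^ 2).toNNReal •
          eLpNorm (fun x => ∫⁻ q, ‖hessNorm d φ (x + q.2 • (-ε) • q.1)‖ₑ ∂P) 2 volume :=
        eLpNorm_le_nnreal_smul_eLpNorm_of_ae_le_mul'
          (ae_of_all _ fun x => enorm_steklov_sub_self_le hφ ε x) 2
    _ ≤ ENNReal.ofReal ((d * ε / 2) ^ 2) * eLpNorm (hessNorm d φ) 2 volume :=
        mul_le_mul_right average _
    _ ≤ ENNReal.ofReal (((d + 1) / 2) ^ 2 * ε ^ 2) * eLpNorm (hessNorm d φ) 2 volume := by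
        gcongr
        calc (d * ε / 2) ^ 2 = (d / 2) ^ 2 * ε ^ 2 := by ring
          _ ≤ ((d + 1) / 2) ^ 2 * ε ^ 2 := by gcongr; linarith
end
end

section
/- Let θ : ℝ^d → ℝ be a bounded measurable compactly supported function with θ ≥ 0 and ∫_{ℝ^d} θ(x) dx = 1, and for ε > 0 define the smoothing operator Θ^ε by (Θ^ε φ)(x) = ∫_{ℝ^d} φ(x − εω) θ(ω) dω. Then there exists a constant C depending only on θ and d such that for every ε > 0, every φ ∈ L²(ℝ^d), and every measurable 1-periodic function b : ℝ^d → ℝ with b|_Y ∈ L²(Y), the function x ↦ b^ε(x)(Θ^ε φ)(x) belongs to L²(ℝ^d) and ‖b^ε Θ^ε φ‖_{L²} ≤ C ⟨b²⟩^{1/2} ‖φ‖_{L²}. -/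
open MeasureTheory

noncomputable section

/-- The general smoothing operator with kernel `θ`:
`(Θ^ε φ)(x) = ∫_{ℝ^d} φ(x - εω) θ(ω) dω`. -/
def smoothΘ (d : ℕ) (θ : (Fin d → ℝ) → ℝ) (ε : ℝ) (φ : (Fin d → ℝ) → ℝ)
    (x : Fin d → ℝ) : ℝ :=
  ∫ ω, φ (x - ε • ω) * θ ω

/-!
Since `θ` is a probability density, Cauchy–Schwarz gives
`|Θ^ε φ(x)|² ≤ ∫ |φ(x - εω)|² θ(ω) dω`. Integrating against `|b^ε|²`, exchanging the integrals
and translating `x = y + εω` leaves `∫ |φ(y)|² (∫ |b(y/ε + ω)|² θ(ω) dω) dy`, and the inner integral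
is bounded uniformly in `y`: `θ ≤ M` vanishes outside the ball `‖ω‖∞ ≤ m`, which is covered by
`(2m+1)^d` integer translates of `Y`, each carrying the mass `⟨b²⟩` of the periodic function `b²`.
So `C = √(M (2m+1)^d)` works.
-/

open Metric
open scoped ENNReal Pointwise

lemma sq_eLpNorm_two {α ε : Type*} [MeasurableSpace α] [ENorm ε] (μ : Measure α) (f : α → ε) :
    eLpNorm f 2 μ ^ 2 = ∫⁻ x, ‖f x‖ₑ ^ 2 ∂μ := by
  simpa using eLpNorm_nnreal_pow_eq_lintegral (f := f) (μ := μ) (p := 2) two_ne_zero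

lemma sq_enorm_integral_mul_le {α : Type*} [MeasurableSpace α] {μ : Measure α} {w : α → ℝ}
    (hw : Measurable w) (hw0 : ∀ a, 0 ≤ w a)
    [IsProbabilityMeasure (μ.withDensity fun a => ENNReal.ofReal (w a))] {f : α → ℝ}
    (hf : Measurable f) :
    ‖∫ a, f a * w a ∂μ‖ₑ ^ 2 ≤ ∫⁻ a, ‖f a‖ₑ ^ 2 ∂μ.withDensity fun a => ENNReal.ofReal (w a) := by
  set ν := μ.withDensity fun a => ENNReal.ofReal (w a)
  have h1 : ‖∫ a, f a * w a ∂μ‖ₑ ≤ eLpNorm f 1 ν :=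
    calc ‖∫ a, f a * w a ∂μ‖ₑ ≤ ∫⁻ a, ‖f a * w a‖ₑ ∂μ := enorm_integral_le_lintegral_enorm _
      _ = eLpNorm f 1 ν := by
        rw [eLpNorm_one_eq_lintegral_enorm,
          lintegral_withDensity_eq_lintegral_mul _ hw.ennreal_ofReal hf.enorm]
        congr with a
        rw [enorm_mul, Real.enorm_of_nonneg (hw0 a), mul_comm, Pi.mul_apply]
  calc ‖∫ a, f a * w a ∂μ‖ₑ ^ 2 ≤ eLpNorm f 2 ν ^ 2 := by
        gcongr
        exact h1.trans (eLpNorm_le_eLpNorm_of_exponent_le one_le_two hf.aestronglyMeasurable)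
    _ = ∫⁻ a, ‖f a‖ₑ ^ 2 ∂ν := sq_eLpNorm_two ν f

lemma lintegral_enorm_sq_eq_ofReal_integral_sq {α : Type*} [MeasurableSpace α] {μ : Measure α}
    {f : α → ℝ} (hf : MemLp f 2 μ) : ∫⁻ x, ‖f x‖ₑ ^ 2 ∂μ = ENNReal.ofReal (∫ x, f x ^ 2 ∂μ) := by
  rw [ofReal_integral_eq_lintegral_ofReal hf.integrable_sq (ae_of_all _ fun x => sq_nonneg _)]
  congr with x
  rw [Real.enorm_eq_ofReal_abs, ← ENNReal.ofReal_pow (abs_nonneg _), sq_abs]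

lemma eLpNorm_le_ofReal_mul_of_lintegral_sq_le {α : Type*} [MeasurableSpace α] {μ : Measure α}
    {f g : α → ℝ} {A I : ℝ} (hA : 0 ≤ A) (hI : 0 ≤ I)
    (h : ∫⁻ x, ‖f x‖ₑ ^ 2 ∂μ ≤ ENNReal.ofReal A * ENNReal.ofReal I * ∫⁻ x, ‖g x‖ₑ ^ 2 ∂μ) :
    eLpNorm f 2 μ ≤ ENNReal.ofReal (√A * I ^ ((1:ℝ)/2)) * eLpNorm g 2 μ := by
  rw [← ENNReal.pow_le_pow_left_iff two_ne_zero, mul_pow, ← ENNReal.ofReal_pow (by positivity),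
    mul_pow, Real.sq_sqrt hA, ← Real.sqrt_eq_rpow, Real.sq_sqrt hI, ENNReal.ofReal_mul hA,
    sq_eLpNorm_two, sq_eLpNorm_two]
  exact h

lemma isProbabilityMeasure_withDensity_ofReal {α : Type*} [MeasurableSpace α] {μ : Measure α}
    {w : α → ℝ} (hw0 : ∀ x, 0 ≤ w x) (hw1 : ∫ x, w x ∂μ = 1) :
    IsProbabilityMeasure (μ.withDensity fun x => ENNReal.ofReal (w x)) := by
  -- a non-integrable `w` would have Bochner integral `0`, not `1`
  have hw_int : Integrable w μ := by
    by_contra h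
    simp [integral_undef h] at hw1
  constructor
  rw [withDensity_apply _ MeasurableSet.univ, Measure.restrict_univ,
    ← ofReal_integral_eq_lintegral_ofReal hw_int (ae_of_all _ hw0), hw1, ENNReal.ofReal_one]

lemma withDensity_le_smul_restrict {α : Type*} [MeasurableSpace α] {μ : Measure α}
    {f : α → ℝ≥0∞} {s : Set α} (hs : MeasurableSet s) {c : ℝ≥0∞} (hfc : ∀ x, f x ≤ c)
    (hfs : ∀ x ∉ s, f x = 0) : μ.withDensity f ≤ c • μ.restrict s := by
  rw [← withDensity_const, ← withDensity_indicator hs]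
  refine withDensity_mono (ae_of_all _ fun x => ?_)
  by_cases hx : x ∈ s
  · simpa [hx] using hfc x
  · simp [hx, hfs x hx]

lemma lintegral_mul_lintegral_sub_le {G α : Type*} [MeasurableSpace G] [AddGroup G]
    [MeasurableAdd₂ G] [MeasurableNeg G] {μ : Measure G} [μ.IsAddRightInvariant] [SFinite μ]
    [MeasurableSpace α] {ν : Measure α} [SFinite ν] {T : α → G} (hT : Measurable T)
    {f ψ : G → ℝ≥0∞} (hf : Measurable f) (hψ : Measurable ψ) {K : ℝ≥0∞}
    (hK : ∀ y, ∫⁻ ω, f (y + T ω) ∂ν ≤ K) :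
    ∫⁻ x, f x * ∫⁻ ω, ψ (x - T ω) ∂ν ∂μ ≤ K * ∫⁻ x, ψ x ∂μ := by
  have hψT : Measurable fun p : G × α => ψ (p.1 - T p.2) :=
    hψ.comp (measurable_fst.sub (hT.comp measurable_snd))
  have hfT : Measurable fun p : α × G => f (p.2 + T p.1) :=
    hf.comp (measurable_snd.add (hT.comp measurable_fst))
  calc ∫⁻ x, f x * ∫⁻ ω, ψ (x - T ω) ∂ν ∂μ = ∫⁻ x, ∫⁻ ω, f x * ψ (x - T ω) ∂ν ∂μ := by
        congr with x
        exact (lintegral_const_mul _ (hψT.comp measurable_prodMk_left)).symm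
    _ = ∫⁻ ω, ∫⁻ x, f x * ψ (x - T ω) ∂μ ∂ν :=
        lintegral_lintegral_swap ((hf.comp measurable_fst).mul hψT).aemeasurable
    _ = ∫⁻ ω, ∫⁻ y, f (y + T ω) * ψ y ∂μ ∂ν := by
        congr with ω
        rw [← lintegral_add_right_eq_self _ (T ω)]
        simp only [add_sub_cancel_right]
    _ = ∫⁻ y, ψ y * ∫⁻ ω, f (y + T ω) ∂ν ∂μ := by
        rw [lintegral_lintegral_swap (hfT.mul (hψ.comp measurable_snd)).aemeasurable]
        congr with y
        exact (lintegral_mul_const _ (hfT.comp measurable_prodMk_right)).trans (mul_comm _ _)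
    _ ≤ ∫⁻ y, ψ y * K ∂μ := by gcongr with y; exact hK y
    _ = K * ∫⁻ x, ψ x ∂μ := by rw [lintegral_mul_const _ hψ, mul_comm]

section Periodic

variable {d : ℕ}

def IntPeriodic {β : Type*} (g : (Fin d → ℝ) → β) : Prop :=
  ∀ (k : Fin d → ℤ) (x : Fin d → ℝ), g (x + fun i => (k i : ℝ)) = g x

abbrev intLattice (d : ℕ) : Submodule ℤ (Fin d → ℝ) :=
  Submodule.span ℤ (Set.range (Pi.basisFun ℝ (Fin d)))

instance (d : ℕ) : VAddInvariantMeasure (intLattice d) (Fin d → ℝ) volume :=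
  ⟨fun l s _ => measure_preimage_add volume (l : Fin d → ℝ) s⟩

lemma exists_intCast_eq_of_mem_intLattice {l : Fin d → ℝ} (hl : l ∈ intLattice d) :
    ∃ k : Fin d → ℤ, l = fun i => (k i : ℝ) := by
  choose k hk using (Module.Basis.mem_span_iff_repr_mem ℤ (Pi.basisFun ℝ (Fin d)) l).mp hl
  exact ⟨k, funext fun i => by simpa using (hk i).symm⟩

lemma IntPeriodic.vadd_eq {β : Type*} {g : (Fin d → ℝ) → β} (hg : IntPeriodic g)
    (l : intLattice d) (x : Fin d → ℝ) : g (l +ᵥ x) = g x := by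
  obtain ⟨k, hk⟩ := exists_intCast_eq_of_mem_intLattice l.2
  rw [Submodule.vadd_def, vadd_eq_add, add_comm, hk]
  exact hg k x

lemma IntPeriodic.comp_add_left {β : Type*} {g : (Fin d → ℝ) → β} (hg : IntPeriodic g)
    (u : Fin d → ℝ) : IntPeriodic fun x => g (u + x) :=
  fun k x => by
    show g (u + (x + _)) = g (u + x)
    rw [← add_assoc, hg k]

lemma measurableSet_cube : MeasurableSet (cube d) :=
  MeasurableSet.univ_pi fun _ => measurableSet_Ico

lemma cube_eq_vadd_fundamentalDomain :
    cube d = (fun _ : Fin d => -(1:ℝ)/2) +ᵥ ZSpan.fundamentalDomain (Pi.basisFun ℝ (Fin d)) := by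
  ext x
  simp only [ZSpan.fundamentalDomain_pi_basisFun, Set.mem_vadd_set_iff_neg_vadd_mem, cube,
    Set.mem_pi, Set.mem_univ, Set.mem_Ico, vadd_eq_add, Pi.add_apply, Pi.neg_apply, true_implies]
  refine forall_congr' fun i => ?_
  constructor <;> rintro ⟨h1, h2⟩ <;> constructor <;> linarith

lemma isAddFundamentalDomain_cube : IsAddFundamentalDomain (intLattice d) (cube d) volume := by
  rw [cube_eq_vadd_fundamentalDomain]
  exact (ZSpan.isAddFundamentalDomain _ volume).vadd_of_comm _

lemma IntPeriodic.setLIntegral_vadd_cube {g : (Fin d → ℝ) → ℝ≥0∞} (hg : IntPeriodic g)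
    (v : Fin d → ℝ) : ∫⁻ x in v +ᵥ cube d, g x = ∫⁻ x in cube d, g x :=
  (isAddFundamentalDomain_cube.vadd_of_comm v).setLIntegral_eq isAddFundamentalDomain_cube g
    hg.vadd_eq

lemma IntPeriodic.setLIntegral_cube_add {g : (Fin d → ℝ) → ℝ≥0∞} (hg : IntPeriodic g)
    (u : Fin d → ℝ) : ∫⁻ x in cube d, g (u + x) = ∫⁻ x in cube d, g x := by
  rw [(measurePreserving_add_left volume u).setLIntegral_comp_emb (measurableEmbedding_addLeft u),
    ← hg.setLIntegral_vadd_cube u, ← Set.image_vadd]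
  rfl

lemma closedBall_subset_biUnion_vadd_cube (m : ℕ) :
    closedBall (0 : Fin d → ℝ) m ⊆
      ⋃ k ∈ Fintype.piFinset fun _ : Fin d => Finset.Icc (-(m : ℤ)) m,
        (fun i => (k i : ℝ)) +ᵥ cube d := by
  intro ω hω
  have hωi : ∀ i, |ω i| ≤ m := fun i =>
    (norm_le_pi_norm ω i).trans (mem_closedBall_zero_iff.mp hω)
  have hround : ∀ i, ω i ∈ Set.Ico ((round (ω i) : ℝ) - 1/2) (round (ω i) + 1/2) :=
    fun i => round_eq_iff.mp rfl
  refine Set.mem_biUnion (x := fun i => round (ω i)) ?_ ?_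
  · refine Fintype.mem_piFinset.mpr fun i => Finset.mem_Icc.mpr ?_
    obtain ⟨h1, h2⟩ := abs_le.mp (hωi i)
    obtain ⟨h3, h4⟩ := hround i
    constructor
    · have : (-(m : ℤ) : ℝ) < round (ω i) + 1 := by push_cast; linarith
      exact Int.lt_add_one_iff.mp (by exact_mod_cast this)
    · have : (round (ω i) : ℝ) < (m : ℤ) + 1 := by push_cast; linarith
      exact Int.lt_add_one_iff.mp (by exact_mod_cast this)
  · rw [Set.mem_vadd_set_iff_neg_vadd_mem]
    simp only [cube, Set.mem_pi, Set.mem_univ, Set.mem_Ico, vadd_eq_add, Pi.add_apply,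
      Pi.neg_apply, true_implies]
    intro i
    obtain ⟨h3, h4⟩ := hround i
    constructor <;> linarith

lemma IntPeriodic.setLIntegral_closedBall_le {g : (Fin d → ℝ) → ℝ≥0∞} (hg : IntPeriodic g) (m : ℕ) :
    ∫⁻ x in closedBall 0 m, g x ≤ (2 * m + 1) ^ d * ∫⁻ x in cube d, g x := by
  set T := Fintype.piFinset fun _ : Fin d => Finset.Icc (-(m : ℤ)) m
  have hT : (T.card : ℝ≥0∞) = (2 * m + 1) ^ d := by
    have hIcc : ((m : ℤ) + 1 - -(m : ℤ)).toNat = 2 * m + 1 := by omega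
    rw [Fintype.card_piFinset, Finset.prod_const, Finset.card_univ, Fintype.card_fin,
      Int.card_Icc, hIcc]
    push_cast
    rfl
  set ν := volume.withDensity g
  calc ∫⁻ x in closedBall 0 m, g x = ν (closedBall 0 m) :=
        (withDensity_apply _ measurableSet_closedBall).symm
    _ ≤ ∑ k ∈ T, ν ((fun i => (k i : ℝ)) +ᵥ cube d) :=
        (measure_mono (closedBall_subset_biUnion_vadd_cube m)).trans
          (measure_biUnion_finset_le T _)
    _ = ∑ _k ∈ T, ∫⁻ x in cube d, g x := by
        refine Finset.sum_congr rfl fun k _ => ?_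
        rw [withDensity_apply _ (measurableSet_cube.const_vadd _), hg.setLIntegral_vadd_cube]
    _ = (2 * m + 1) ^ d * ∫⁻ x in cube d, g x := by rw [Finset.sum_const, nsmul_eq_mul, hT]

lemma IntPeriodic.lintegral_add_le {g : (Fin d → ℝ) → ℝ≥0∞} (hg : IntPeriodic g)
    {ν : Measure (Fin d → ℝ)} {c : ℝ≥0∞} {m : ℕ}
    (hν : ν ≤ c • volume.restrict (closedBall 0 m)) (u : Fin d → ℝ) :
    ∫⁻ ω, g (u + ω) ∂ν ≤ c * (2 * m + 1) ^ d * ∫⁻ x in cube d, g x :=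
  calc ∫⁻ ω, g (u + ω) ∂ν ≤ ∫⁻ ω, g (u + ω) ∂(c • volume.restrict (closedBall 0 m)) :=
        lintegral_mono' hν le_rfl
    _ = c * ∫⁻ ω in closedBall 0 m, g (u + ω) := lintegral_smul_measure _ _
    _ ≤ c * ((2 * m + 1) ^ d * ∫⁻ x in cube d, g (u + x)) := by
        gcongr
        exact (hg.comp_add_left u).setLIntegral_closedBall_le m
    _ = c * (2 * m + 1) ^ d * ∫⁻ x in cube d, g x := by
        rw [hg.setLIntegral_cube_add, mul_assoc]

end Periodic

lemma exists_withDensity_le_smul_restrict_closedBall {d : ℕ} {θ : (Fin d → ℝ) → ℝ}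
    (hθ_bdd : ∃ M, ∀ x, θ x ≤ M) (hθ_supp : HasCompactSupport θ) :
    ∃ M : ℝ, 0 < M ∧ ∃ m : ℕ, volume.withDensity (fun ω => ENNReal.ofReal (θ ω)) ≤
      ENNReal.ofReal M • volume.restrict (closedBall 0 m) := by
  obtain ⟨M, hM⟩ := hθ_bdd
  obtain ⟨r, hr⟩ := hθ_supp.isBounded.subset_closedBall 0
  refine ⟨max M 1, by positivity, ⌈r⌉₊, withDensity_le_smul_restrict measurableSet_closedBall
    (fun x => ENNReal.ofReal_le_ofReal ((hM x).trans (le_max_left _ _))) fun x hx => ?_⟩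
  rw [image_eq_zero_of_notMem_tsupport fun hx' => hx (closedBall_subset_closedBall
    (Nat.le_ceil r) (hr hx')), ENNReal.ofReal_zero]

lemma exists_intPeriodic_ae_eq {d : ℕ} {β : Type*} [MeasurableSpace β]
    {b : (Fin d → ℝ) → β} (hb_meas : Measurable b)
    (hb_per : ∀ k : Fin d → ℤ, ∀ᵐ x, b (x + fun i => (k i : ℝ)) = b x) :
    ∃ b' : (Fin d → ℝ) → β, Measurable b' ∧ IntPeriodic b' ∧ b' =ᵐ[volume] b := by
  refine ⟨fun x => b fun i => Int.fract (x i),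
    hb_meas.comp (measurable_pi_lambda _ fun i => measurable_fract.comp (measurable_pi_apply i)),
    fun k x => by simp only [Pi.add_apply, Int.fract_add_intCast], ?_⟩
  have hshift : ∀ k : Fin d → ℤ, ∀ᵐ x, b (x - fun i => (k i : ℝ)) = b x := fun k =>
    ((measurePreserving_sub_right volume fun i => (k i : ℝ)).quasiMeasurePreserving.ae_eq_comp
      (hb_per k)).mono fun x hx => by simpa using hx.symm
  filter_upwards [ae_all_iff.mpr hshift] with x hx
  convert hx fun i => ⌊x i⌋ using 2
  funext i
  exact (Int.self_sub_floor (x i)).symm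

section Smoothing

variable {d : ℕ} {θ : (Fin d → ℝ) → ℝ} {ε : ℝ}

lemma smoothΘ_congr_ae (hε : ε ≠ 0) {φ ψ : (Fin d → ℝ) → ℝ} (h : φ =ᵐ[volume] ψ) :
    smoothΘ d θ ε φ = smoothΘ d θ ε ψ := by
  funext x
  refine integral_congr_ae ?_
  have hqmp : Measure.QuasiMeasurePreserving (fun ω : Fin d → ℝ => x - ε • ω) volume volume :=
    (volume.measurePreserving_sub_left x).quasiMeasurePreserving.comp
      (Measure.quasiMeasurePreserving_smul volume hε)
  filter_upwards [hqmp.ae_eq_comp h] with ω hω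
  simp only [Function.comp_apply] at hω
  rw [hω]

lemma measurable_smoothΘ (hθ : Measurable θ) {φ : (Fin d → ℝ) → ℝ} (hφ : AEMeasurable φ)
    (hε : ε ≠ 0) : Measurable (smoothΘ d θ ε φ) := by
  obtain ⟨φ', hφ'_meas, hφφ'⟩ := hφ
  rw [smoothΘ_congr_ae hε hφφ']
  exact (StronglyMeasurable.integral_prod_right' (f := fun p : (Fin d → ℝ) × (Fin d → ℝ) =>
    φ' (p.1 - ε • p.2) * θ p.2) (by fun_prop)).measurable

variable [IsProbabilityMeasure (volume.withDensity fun ω => ENNReal.ofReal (θ ω))]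
  {c : ℝ≥0∞} {m : ℕ}

lemma lintegral_periodic_mul_sq_enorm_smoothΘ_le (hθ_meas : Measurable θ)
    (hθ_nonneg : ∀ x, 0 ≤ θ x)
    (hν : volume.withDensity (fun ω => ENNReal.ofReal (θ ω)) ≤ c • volume.restrict (closedBall 0 m))
    {g : (Fin d → ℝ) → ℝ≥0∞} (hg_meas : Measurable g) (hg_per : IntPeriodic g)
    {φ : (Fin d → ℝ) → ℝ} (hφ : Measurable φ) (hε : ε ≠ 0) :
    ∫⁻ x, g (ε⁻¹ • x) * ‖smoothΘ d θ ε φ x‖ₑ ^ 2 ≤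
      c * (2 * m + 1) ^ d * (∫⁻ x in cube d, g x) * ∫⁻ x, ‖φ x‖ₑ ^ 2 := by
  set ν := volume.withDensity fun ω => ENNReal.ofReal (θ ω)
  calc ∫⁻ x, g (ε⁻¹ • x) * ‖smoothΘ d θ ε φ x‖ₑ ^ 2
      ≤ ∫⁻ x, g (ε⁻¹ • x) * ∫⁻ ω, ‖φ (x - ε • ω)‖ₑ ^ 2 ∂ν := by
        gcongr with x
        exact sq_enorm_integral_mul_le hθ_meas hθ_nonneg (hφ.comp (by fun_prop))
    _ ≤ _ := by
        refine lintegral_mul_lintegral_sub_le (measurable_const_smul ε)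
          (hg_meas.comp (measurable_const_smul ε⁻¹)) (hφ.enorm.pow_const 2) fun y => ?_
        simpa only [Function.comp_apply, smul_add, smul_smul, inv_mul_cancel₀ hε, one_smul]
          using hg_per.lintegral_add_le hν (ε⁻¹ • y)

lemma lintegral_sq_enorm_mul_smoothΘ_le (hθ_meas : Measurable θ) (hθ_nonneg : ∀ x, 0 ≤ θ x)
    (hν : volume.withDensity (fun ω => ENNReal.ofReal (θ ω)) ≤ c • volume.restrict (closedBall 0 m))
    {b : (Fin d → ℝ) → ℝ} (hb_meas : Measurable b)
    (hb_per : ∀ k : Fin d → ℤ, ∀ᵐ x, b (x + fun i => (k i : ℝ)) = b x)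
    {φ : (Fin d → ℝ) → ℝ} (hφ : AEMeasurable φ) (hε : ε ≠ 0) :
    ∫⁻ x, ‖b (ε⁻¹ • x) * smoothΘ d θ ε φ x‖ₑ ^ 2 ≤
      c * (2 * m + 1) ^ d * (∫⁻ x in cube d, ‖b x‖ₑ ^ 2) * ∫⁻ x, ‖φ x‖ₑ ^ 2 := by
  obtain ⟨b', hb'_meas, hb'_per, hb'_ae⟩ := exists_intPeriodic_ae_eq hb_meas hb_per
  obtain ⟨φ', hφ'_meas, hφφ'⟩ := hφ
  have hb_sq : ∫⁻ x in cube d, ‖b x‖ₑ ^ 2 = ∫⁻ x in cube d, ‖b' x‖ₑ ^ 2 :=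
    lintegral_congr_ae ((ae_restrict_of_ae hb'_ae).mono fun x hx => by simp only [hx])
  have hφ_sq : ∫⁻ x, ‖φ x‖ₑ ^ 2 = ∫⁻ x, ‖φ' x‖ₑ ^ 2 :=
    lintegral_congr_ae (hφφ'.mono fun x hx => by simp only [hx])
  have hF_sq : ∫⁻ x, ‖b (ε⁻¹ • x) * smoothΘ d θ ε φ x‖ₑ ^ 2 =
      ∫⁻ x, ‖b' (ε⁻¹ • x)‖ₑ ^ 2 * ‖smoothΘ d θ ε φ' x‖ₑ ^ 2 := by
    refine lintegral_congr_ae (((Measure.quasiMeasurePreserving_smul volume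
      (inv_ne_zero hε)).ae_eq_comp hb'_ae).mono fun x hx => ?_)
    simp only [Function.comp_apply] at hx ⊢
    rw [hx, smoothΘ_congr_ae hε hφφ', enorm_mul, mul_pow]
  rw [hF_sq, hb_sq, hφ_sq]
  exact lintegral_periodic_mul_sq_enorm_smoothΘ_le hθ_meas hθ_nonneg hν
    (hb'_meas.enorm.pow_const 2) (fun k x => by simp only [hb'_per k x]) hφ'_meas hε

end Smoothing

/-- Let `θ` be a bounded measurable compactly supported kernel with
`θ ≥ 0` and `∫ θ = 1`. Then there is a constant `C = C(θ, d)` such that for every `ε > 0`,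
every `φ ∈ L²(ℝ^d)` and every measurable `1`-periodic `b` with `b|_Y ∈ L²(Y)`, the function
`x ↦ b(x/ε)(Θ^ε φ)(x)` is in `L²(ℝ^d)` and `‖b^ε Θ^ε φ‖_{L²} ≤ C ⟨b²⟩^{1/2} ‖φ‖_{L²}`. -/
theorem statement13 (d : ℕ) (θ : (Fin d → ℝ) → ℝ)
    (hθ_meas : Measurable θ) (hθ_bdd : ∃ Mθ : ℝ, ∀ x, θ x ≤ Mθ)
    (hθ_supp : HasCompactSupport θ) (hθ_nonneg : ∀ x, 0 ≤ θ x)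
    (hθ_int : ∫ x, θ x = 1) :
    ∃ C : ℝ, 0 < C ∧ ∀ ε : ℝ, 0 < ε →
      ∀ φ : (Fin d → ℝ) → ℝ, MemLp φ 2 volume →
      ∀ b : (Fin d → ℝ) → ℝ, Measurable b →
        (∀ k : Fin d → ℤ, ∀ᵐ x : Fin d → ℝ, b (x + fun i => (k i : ℝ)) = b x) →
        MemLp b 2 (volume.restrict (cube d)) →
      MemLp (fun x => b (ε⁻¹ • x) * smoothΘ d θ ε φ x) 2 volume ∧
        eLpNorm (fun x => b (ε⁻¹ • x) * smoothΘ d θ ε φ x) 2 volume ≤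
          ENNReal.ofReal (C * (∫ y in cube d, (b y) ^ 2) ^ ((1:ℝ)/2)) *
            eLpNorm φ 2 volume := by
  obtain ⟨M, hM, m, hν⟩ := exists_withDensity_le_smul_restrict_closedBall hθ_bdd hθ_supp
  have := isProbabilityMeasure_withDensity_ofReal hθ_nonneg hθ_int
  refine ⟨√(M * (2 * m + 1) ^ d), by positivity, fun ε hε φ hφ b hb_meas hb_per hb_L2 => ?_⟩
  have hA : ENNReal.ofReal (M * (2 * m + 1) ^ d) = ENNReal.ofReal M * (2 * m + 1) ^ d := by
    rw [ENNReal.ofReal_mul hM.le]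
    exact_mod_cast congrArg (ENNReal.ofReal M * ·) (ENNReal.ofReal_natCast ((2 * m + 1) ^ d))
  have hle := eLpNorm_le_ofReal_mul_of_lintegral_sq_le (μ := volume) (g := φ)
    (A := M * (2 * m + 1) ^ d) (by positivity)
    (setIntegral_nonneg measurableSet_cube fun y _ => sq_nonneg (b y)) <| by
    rw [hA, ← lintegral_enorm_sq_eq_ofReal_integral_sq hb_L2]
    exact lintegral_sq_enorm_mul_smoothΘ_le hθ_meas hθ_nonneg hν hb_meas hb_per
      hφ.1.aemeasurable hε.ne'
  refine ⟨⟨?_, hle.trans_lt (ENNReal.mul_lt_top ENNReal.ofReal_lt_top hφ.2)⟩, hle⟩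
  exact ((hb_meas.comp (measurable_const_smul ε⁻¹)).mul
    (measurable_smoothΘ hθ_meas hφ.1.aemeasurable hε.ne')).aestronglyMeasurable
end
end
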